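/- arXiv:1710.10339 — 4 statements merged into one kernel-verified Lean document; each statement's English description precedes it below -/
import Mathlib

section
/- Under the G(n, p_n) Erdős–Rényi measure with p_n = Ω(n^{-c}) for some 0 ≤ c < 1/2, for every ε, δ > 0 there exists N such that for all n ≥ N, with probability at least 1 - ε, every subset S of the vertex set with |S| = ⌊n/2⌋ satisfies c(S) ≥ (1-δ)·n²·p_n/4. -/
/-!
For a fixed `S` with `|S| = ⌊n/2⌋`, the cut `c(S)` is a sum of `M ≥ |S| |Sᶜ| ≥ (n² - 1) / 4`
independent Bernoulli(`p`) edge indicators. For `δ ≤ 1` and `n` large the threshold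
`(1 - δ) n² p / 4` is at most `(1 - δ / 2) M p`, so Hoeffding's inequality bounds the probability
that `c(S)` falls below it by `exp (-δ² M p² / 2) ≤ exp (-δ² n² p² / 16)`. A union bound over the
at most `2ⁿ` such sets leaves a failure probability of at most `2ⁿ exp (-δ² K² n^(2 - 2c) / 16)`,
which tends to `0` because `2 - 2c > 1`.
-/

open MeasureTheory ProbabilityTheory Filter
open scoped ENNReal NNReal

/-- Index type for potential edges: 2-element subsets of the vertex set. -/
abbrev EdgeIdx (n : ℕ) := {e : Finset (Fin n) // e.card = 2}

/-- The Erdős–Rényi measure `G(n,p)`: each potential edge is present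
independently with probability `p`. -/
noncomputable def erMeasure (n : ℕ) (p : ℝ≥0∞) (hp : p ≤ 1) :
    Measure (EdgeIdx n → Bool) :=
  Measure.pi fun _ => (PMF.bernoulli p.toNNReal
    (by simpa using ENNReal.toNNReal_mono ENNReal.one_ne_top hp)).toMeasure

/-- The cut size `c(S)`: number of present edges with one endpoint in `S`
and the other outside `S`. -/
noncomputable def cut (n : ℕ) (S : Finset (Fin n)) (G : EdgeIdx n → Bool) : ℕ :=
  letI := Classical.decEq (Fin n)
  (Finset.univ.filter fun e : EdgeIdx n =>
    G e = true ∧ (∃ u ∈ e.1, u ∈ S) ∧ (∃ v ∈ e.1, v ∉ S)).card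

/-- `L(i, φ, G)`: vertices placed at the (1-indexed) positions `1, …, i`
by the layout `φ` (positions in `Fin n` are 0-indexed). -/
def Lset (n : ℕ) (φ : Fin n ≃ Fin n) (i : ℕ) : Finset (Fin n) :=
  Finset.univ.filter fun u => (φ u : ℕ) < i

/-- `θ(i, φ, G)`: number of present edges crossing position `i`. -/
noncomputable def theta (n : ℕ) (G : EdgeIdx n → Bool) (φ : Fin n ≃ Fin n) (i : ℕ) : ℕ :=
  cut n (Lset n φ i) G

/-- Cutwidth of a layout: `max_{1 ≤ i ≤ n} θ(i, φ, G)`. -/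
noncomputable def CW (n : ℕ) (G : EdgeIdx n → Bool) (φ : Fin n ≃ Fin n) : ℕ :=
  (Finset.Icc 1 n).sup (theta n G φ)

/-- `u` and `v` are adjacent in `G`. -/
def adj (n : ℕ) (G : EdgeIdx n → Bool) (u v : Fin n) : Prop :=
  u ≠ v ∧ ∃ e : EdgeIdx n, G e = true ∧ e.1 = {u, v}

/-- `δ(i, φ, G)`: number of vertices at positions `≤ i` with a neighbour at a
position `> i`. -/
noncomputable def vsep (n : ℕ) (G : EdgeIdx n → Bool) (φ : Fin n ≃ Fin n) (i : ℕ) : ℕ :=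
  letI := Classical.dec
  (Finset.univ.filter fun u =>
    (φ u : ℕ) < i ∧ ∃ v, i ≤ (φ v : ℕ) ∧ adj n G u v).card

/-- Vertex separation of a layout: `max_{1 ≤ i ≤ n} δ(i, φ, G)`. -/
noncomputable def VS (n : ℕ) (G : EdgeIdx n → Bool) (φ : Fin n ≃ Fin n) : ℕ :=
  (Finset.Icc 1 n).sup (vsep n G φ)

open Real Topology

lemma Nat.sq_le_four_mul_div_two_mul_sub_div_two_add_one (n : ℕ) :
    n ^ 2 ≤ 4 * (n / 2 * (n - n / 2)) + 1 := by
  obtain ⟨k, rfl | rfl⟩ := Nat.even_or_odd' n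
  · rw [Nat.mul_div_cancel_left k two_pos, show 2 * k - k = k by omega]
    ring_nf; omega
  · rw [show (2 * k + 1) / 2 = k by omega, show 2 * k + 1 - k = k + 1 by omega]
    ring_nf; omega

lemma sq_mul_rpow_two_sub_two_mul_le {x K c q : ℝ} (hx : 0 ≤ x) (hK : 0 ≤ K) (hc : c < 1)
    (h : K * x ^ (-c) ≤ q) : K ^ 2 * x ^ (2 - 2 * c) ≤ x ^ 2 * q ^ 2 := by
  have hrpow : x ^ (2 - 2 * c) = x ^ 2 * (x ^ (-c)) ^ 2 := by
    rw [sub_eq_add_neg, rpow_add' hx (by linarith), ← rpow_natCast, ← rpow_natCast,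
      ← rpow_mul hx]
    push_cast
    ring_nf
  have hsq : (K * x ^ (-c)) ^ 2 ≤ q ^ 2 := pow_le_pow_left₀ (by positivity) h 2
  rw [hrpow]
  nlinarith [mul_le_mul_of_nonneg_left hsq (sq_nonneg x)]

lemma tendsto_two_pow_mul_exp_neg_rpow {C β : ℝ} (hC : 0 < C) (hβ : 1 < β) :
    Tendsto (fun n : ℕ => 2 ^ n * exp (-(C * (n : ℝ) ^ β))) atTop (𝓝 0) := by
  have hlin : Tendsto (fun n : ℕ => log 2 - C * (n : ℝ) ^ (β - 1)) atTop atBot :=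
    tendsto_atBot_add_const_left _ _ (tendsto_neg_atTop_atBot.comp
      ((tendsto_rpow_atTop (by linarith)).const_mul_atTop hC |>.comp tendsto_natCast_atTop_atTop))
  refine (tendsto_exp_atBot.comp (tendsto_natCast_atTop_atTop.atTop_mul_atBot₀ hlin)).congr' ?_
  filter_upwards [eventually_gt_atTop 0] with n hn
  have hn' : (0 : ℝ) < n := by exact_mod_cast hn
  have hpow : (n : ℝ) * (C * (n : ℝ) ^ (β - 1)) = C * (n : ℝ) ^ β := by
    rw [rpow_sub_one hn'.ne']; field_simp
  rw [Function.comp_apply, mul_sub, hpow, sub_eq_add_neg, exp_add, exp_nat_mul, exp_log two_pos]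

namespace ErdosRenyi

open Finset

def crossingEdges (n : ℕ) (S : Finset (Fin n)) : Finset (EdgeIdx n) :=
  univ.filter fun e => (∃ u ∈ e.1, u ∈ S) ∧ ∃ v ∈ e.1, v ∉ S

variable {n : ℕ}

lemma cut_eq_sum_toNat (S : Finset (Fin n)) (G : EdgeIdx n → Bool) :
    (cut n S G : ℝ) = ∑ e ∈ crossingEdges n S, ((G e).toNat : ℝ) := by
  classical
  rw [cut, crossingEdges, sum_filter, card_filter]
  push_cast
  refine sum_congr rfl fun e _ => ?_
  cases G e <;> simp

lemma card_mul_card_compl_le_card_crossingEdges (S : Finset (Fin n)) :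
    #S * #Sᶜ ≤ #(crossingEdges n S) := by
  classical
  have hne : ∀ x : S ×ˢ Sᶜ, x.1.1 ≠ x.1.2 := fun x h => by
    have := mem_product.mp x.2
    simp_all
  let f : S ×ˢ Sᶜ → EdgeIdx n := fun x => ⟨{x.1.1, x.1.2}, card_pair (hne x)⟩
  have h := card_le_card_of_injOn f (s := univ) (t := crossingEdges n S) ?_ ?_
  · simpa [card_product] using h
  · rintro ⟨⟨u, v⟩, huv⟩ -
    simp only [mem_product, mem_compl] at huv
    simp [f, crossingEdges, huv]
  · rintro ⟨⟨u, v⟩, huv⟩ - ⟨⟨u', v'⟩, huv'⟩ - heq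
    simp only [mem_product, mem_compl] at huv huv'
    have hfin : ({u, v} : Finset (Fin n)) = {u', v'} := congrArg Subtype.val heq
    have hu : u' ∈ ({u, v} : Finset (Fin n)) := hfin ▸ by simp
    have hv : v' ∈ ({u, v} : Finset (Fin n)) := hfin ▸ by simp
    simp only [mem_insert, mem_singleton] at hu hv
    grind

lemma sq_le_four_mul_card_crossingEdges_add_one {S : Finset (Fin n)} (hS : #S = n / 2) :
    (n : ℝ) ^ 2 ≤ 4 * #(crossingEdges n S) + 1 := by
  have h := card_mul_card_compl_le_card_crossingEdges S
  rw [card_compl, Fintype.card_fin, hS] at h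
  have : n ^ 2 ≤ 4 * #(crossingEdges n S) + 1 :=
    (Nat.sq_le_four_mul_div_two_mul_sub_div_two_add_one n).trans (by omega)
  exact_mod_cast this

variable {p : ℝ≥0∞} (hp : p ≤ 1)

instance : IsProbabilityMeasure (erMeasure n p hp) := by
  unfold erMeasure; infer_instance

lemma iIndepFun_erMeasure (f : Bool → ℝ) :
    iIndepFun (fun e (G : EdgeIdx n → Bool) => f (G e)) (erMeasure n p hp) :=
  iIndepFun_pi fun _ => Measurable.of_discrete.aemeasurable

lemma integral_toNat_erMeasure (e : EdgeIdx n) :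
    ∫ G, ((G e).toNat : ℝ) ∂erMeasure n p hp = p.toReal := by
  calc ∫ G, ((G e).toNat : ℝ) ∂erMeasure n p hp
      = ∫ b, (b.toNat : ℝ) ∂(erMeasure n p hp).map (fun G => G e) := by
        rw [integral_map (measurable_pi_apply e).aemeasurable
          Measurable.of_discrete.aestronglyMeasurable]
    _ = p.toReal := by
        rw [erMeasure, (measurePreserving_eval _ e).map_eq]
        simp [PMF.integral_eq_sum, PMF.bernoulli, ENNReal.coe_toNNReal_eq_toReal]

lemma hasSubgaussianMGF_sub_toNat_erMeasure (e : EdgeIdx n) :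
    HasSubgaussianMGF (fun G : EdgeIdx n → Bool => p.toReal - (G e).toNat) (1 / 4)
      (erMeasure n p hp) := by
  have h := (hasSubgaussianMGF_of_mem_Icc (μ := erMeasure n p hp) (a := 0) (b := 1)
    (X := fun G => ((G e).toNat : ℝ)) Measurable.of_discrete.aemeasurable
    (ae_of_all _ fun G => by cases G e <;> simp)).neg
  rw [integral_toNat_erMeasure hp] at h
  convert h using 1
  · ext G; simp
  · norm_num

lemma measureReal_cut_le_sub_le (S : Finset (Fin n)) {t : ℝ} (ht : 0 ≤ t) :
    (erMeasure n p hp).real {G | (cut n S G : ℝ) ≤ #(crossingEdges n S) * p.toReal - t}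
      ≤ exp (-2 * t ^ 2 / #(crossingEdges n S)) := by
  have hset : {G | (cut n S G : ℝ) ≤ #(crossingEdges n S) * p.toReal - t}
      = {G | t ≤ ∑ e ∈ crossingEdges n S, (p.toReal - (G e).toNat)} := by
    ext G
    simp only [Set.mem_ofPred_eq, sum_sub_distrib, sum_const, nsmul_eq_mul, ← cut_eq_sum_toNat]
    constructor <;> intro h <;> linarith
  rw [hset]
  refine (HasSubgaussianMGF.measure_sum_ge_le_of_iIndepFun
    (iIndepFun_erMeasure hp fun b => p.toReal - b.toNat)
    (fun e _ => hasSubgaussianMGF_sub_toNat_erMeasure hp e) ht).trans_eq ?_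
  push_cast
  rw [sum_const, nsmul_eq_mul]
  ring_nf

lemma measureReal_cut_lt_le {S : Finset (Fin n)} (hS : #S = n / 2) {δ : ℝ} (hδ0 : 0 < δ)
    (hδ1 : δ ≤ 1) (hn : 2 ≤ δ * n ^ 2) :
    (erMeasure n p hp).real {G | (cut n S G : ℝ) < (1 - δ) * n ^ 2 * p.toReal / 4}
      ≤ exp (-(δ ^ 2 * n ^ 2 * p.toReal ^ 2 / 16)) := by
  set M : ℝ := (#(crossingEdges n S) : ℝ)
  set q := p.toReal
  have hq : 0 ≤ q := ENNReal.toReal_nonneg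
  have hM : (n : ℝ) ^ 2 ≤ 4 * M + 1 := sq_le_four_mul_card_crossingEdges_add_one hS
  have hMpos : 0 < M := by nlinarith
  have hthreshold : (1 - δ) * n ^ 2 * q / 4 ≤ M * q - δ * M * q / 2 := by
    have : (1 - δ) * n ^ 2 ≤ (2 - δ) * (2 * M) := by nlinarith
    nlinarith
  calc (erMeasure n p hp).real {G | (cut n S G : ℝ) < (1 - δ) * n ^ 2 * q / 4}
      ≤ (erMeasure n p hp).real {G | (cut n S G : ℝ) ≤ M * q - δ * M * q / 2} :=
        measureReal_mono <| Set.ofPred_subset_ofPred.mpr fun G hG => hG.le.trans hthreshold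
    _ ≤ exp (-2 * (δ * M * q / 2) ^ 2 / M) := measureReal_cut_le_sub_le hp S (by positivity)
    _ = exp (-(δ ^ 2 * M * q ^ 2 / 2)) := by congr 1; field_simp
    _ ≤ exp (-(δ ^ 2 * n ^ 2 * q ^ 2 / 16)) := by
        have : (n : ℝ) ^ 2 ≤ 8 * M := by nlinarith
        rw [exp_le_exp, neg_le_neg_iff]
        nlinarith [mul_le_mul_of_nonneg_left this (by positivity : 0 ≤ δ ^ 2 * q ^ 2)]

lemma measureReal_exists_cut_lt_le {δ : ℝ} (hδ0 : 0 < δ) (hδ1 : δ ≤ 1)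
    (hn : 2 ≤ δ * n ^ 2) :
    (erMeasure n p hp).real {G | ∃ S : Finset (Fin n), #S = n / 2 ∧
        (cut n S G : ℝ) < (1 - δ) * n ^ 2 * p.toReal / 4}
      ≤ 2 ^ n * exp (-(δ ^ 2 * n ^ 2 * p.toReal ^ 2 / 16)) := by
  have hset : {G | ∃ S : Finset (Fin n), #S = n / 2 ∧
        (cut n S G : ℝ) < (1 - δ) * n ^ 2 * p.toReal / 4}
      = ⋃ S ∈ univ.filter (fun S : Finset (Fin n) => #S = n / 2),
          {G | (cut n S G : ℝ) < (1 - δ) * n ^ 2 * p.toReal / 4} := by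
    ext G; simp
  have hcard : #(univ.filter fun S : Finset (Fin n) => #S = n / 2) ≤ 2 ^ n :=
    (card_filter_le _ _).trans (by simp)
  rw [hset]
  refine (measureReal_biUnion_finset_le _ _).trans <|
    (sum_le_sum fun S hS => measureReal_cut_lt_le hp (mem_filter.mp hS).2 hδ0 hδ1 hn).trans ?_
  rw [sum_const, nsmul_eq_mul]
  gcongr
  exact_mod_cast hcard

lemma ofReal_one_sub_le_erMeasure_forall_cut_ge {δ : ℝ} (hδ0 : 0 < δ) (hδ1 : δ ≤ 1)
    (hn : 2 ≤ δ * n ^ 2) :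
    ENNReal.ofReal (1 - 2 ^ n * exp (-(δ ^ 2 * n ^ 2 * p.toReal ^ 2 / 16)))
      ≤ erMeasure n p hp {G | ∀ S : Finset (Fin n), #S = n / 2 →
          (1 - δ) * n ^ 2 * p.toReal / 4 ≤ cut n S G} := by
  set good := {G | ∀ S : Finset (Fin n), #S = n / 2 →
    (1 - δ) * n ^ 2 * p.toReal / 4 ≤ cut n S G}
  have hbad : goodᶜ = {G | ∃ S : Finset (Fin n), #S = n / 2 ∧
      (cut n S G : ℝ) < (1 - δ) * n ^ 2 * p.toReal / 4} := by
    ext G; simp [good]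
  rw [← ofReal_measureReal, ← compl_compl good,
    probReal_compl_eq_one_sub MeasurableSet.of_discrete, hbad]
  exact ENNReal.ofReal_le_ofReal (by linarith [measureReal_exists_cut_lt_le hp hδ0 hδ1 hn])

end ErdosRenyi

open ErdosRenyi

theorem stmt_7_general (c : ℝ) (hc : c < 1 / 2)
    (p : ℕ → ℝ≥0∞) (hp1 : ∀ n, p n ≤ 1)
    (hΩ : ∃ K : ℝ, 0 < K ∧ ∀ᶠ n : ℕ in atTop, K * (n : ℝ) ^ (-c) ≤ (p n).toReal) :
    ∀ ε : ℝ, 0 < ε → ∀ δ : ℝ, 0 < δ → ∃ N : ℕ, ∀ n ≥ N,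
      ENNReal.ofReal (1 - ε) ≤
        erMeasure n (p n) (hp1 n)
          {G | ∀ S : Finset (Fin n), S.card = n / 2 →
            (1 - δ) * (n : ℝ) ^ 2 * (p n).toReal / 4 ≤ (cut n S G : ℝ)} := by
  obtain ⟨K, hK, hKp⟩ := hΩ
  intro ε hε δ hδ
  set δ₁ := min δ 1
  have hδ₁ : 0 < δ₁ := lt_min hδ one_pos
  have hsmall := (tendsto_two_pow_mul_exp_neg_rpow (C := δ₁ ^ 2 / 16 * K ^ 2) (by positivity)
    (by linarith : 1 < 2 - 2 * c)).eventually (gt_mem_nhds hε)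
  have hlarge := ((tendsto_pow_atTop two_ne_zero).comp tendsto_natCast_atTop_atTop
    |>.const_mul_atTop hδ₁).eventually_ge_atTop 2
  obtain ⟨N, hN⟩ := eventually_atTop.mp ((hsmall.and hKp).and hlarge)
  refine ⟨N, fun n hn => ?_⟩
  obtain ⟨⟨hsmall, hpK⟩, hlarge⟩ := hN n hn
  have hK2 := sq_mul_rpow_two_sub_two_mul_le n.cast_nonneg hK.le (by linarith) hpK
  calc ENNReal.ofReal (1 - ε)
      ≤ ENNReal.ofReal (1 - 2 ^ n * exp (-(δ₁ ^ 2 * n ^ 2 * (p n).toReal ^ 2 / 16))) := by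
        refine ENNReal.ofReal_le_ofReal ((sub_le_sub_left hsmall.le 1).trans ?_)
        gcongr
        nlinarith [mul_le_mul_of_nonneg_left hK2 (sq_nonneg δ₁)]
    _ ≤ _ := ofReal_one_sub_le_erMeasure_forall_cut_ge (hp1 n) hδ₁ (min_le_right _ _) hlarge
    _ ≤ _ := measure_mono <| Set.ofPred_subset_ofPred.mpr fun G hG S hS =>
        le_trans (by gcongr; exact min_le_left _ _) (hG S hS)

/-- High-probability lower bound on all balanced cuts: if `p_n = Ω(n^{-c})`
with `0 ≤ c < 1/2`, then w.h.p. every `S` with `|S| = ⌊n/2⌋` has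
`c(S) ≥ (1 - δ) n² p_n / 4`. -/
theorem stmt_7 (c : ℝ) (hc0 : 0 ≤ c) (hc : c < 1 / 2)
    (p : ℕ → ℝ≥0∞) (hp1 : ∀ n, p n ≤ 1)
    (hΩ : ∃ K : ℝ, 0 < K ∧ ∀ᶠ n : ℕ in atTop, K * (n : ℝ) ^ (-c) ≤ (p n).toReal) :
    ∀ ε : ℝ, 0 < ε → ∀ δ : ℝ, 0 < δ → ∃ N : ℕ, ∀ n ≥ N,
      ENNReal.ofReal (1 - ε) ≤
        erMeasure n (p n) (hp1 n)
          {G | ∀ S : Finset (Fin n), S.card = n / 2 →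
            (1 - δ) * (n : ℝ) ^ 2 * (p n).toReal / 4 ≤ (cut n S G : ℝ)} :=
  stmt_7_general c hc p hp1 hΩ
end

section
/- Under G(n, p_n) with p_n = Ω(n^{-c}), 0 ≤ c < 1/2: for all ε, δ > 0 there exists N such that for all n ≥ N, P[GAPCW(G_n) < 1+δ] > 1-ε, where GAPCW(G) = MAXCW(G)/MINCW(G). -/
/-!
For a fixed vertex set `S`, the cut size `c(S)` is a sum of `|S| (n - |S|) ≤ n² / 4` independent
Bernoulli(`p`) variables, so by Hoeffding's inequality it leaves the window
`|S| (n - |S|) p ± η n² p` with probability at most `2 exp (-8 η² n² p²)`. As `n² p² ≥ K² n^(2 - 2c)`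
and `2 - 2c > 1`, this beats the `2ⁿ` terms of a union bound over all `S`, so w.h.p. all cuts lie
in their windows at once. Then every layout has cutwidth at most `(1/4 + η) n² p` (every position)
and at least `((n² - 1)/4 - η n²) p` (the middle position), and these bounds have ratio close to
`(1 + 4η) / (1 - 4η)`.
-/

open MeasureTheory ProbabilityTheory Filter
open scoped ENNReal NNReal

open Finset Real
open scoped Topology

namespace ProbabilityTheory.HasSubgaussianMGF

variable {Ω : Type*} [MeasurableSpace Ω] {μ : Measure Ω} {X : Ω → ℝ} {c c' : ℝ≥0}

lemma mono (h : HasSubgaussianMGF X c μ) (hc : c ≤ c') : HasSubgaussianMGF X c' μ where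
  integrable_exp_mul := h.integrable_exp_mul
  mgf_le t := (h.mgf_le t).trans (exp_le_exp.2 (by gcongr))

lemma measure_abs_ge_le [IsFiniteMeasure μ] (h : HasSubgaussianMGF X c μ) {ε : ℝ}
    (hε : 0 ≤ ε) : μ.real {ω | ε ≤ |X ω|} ≤ 2 * exp (-ε ^ 2 / (2 * c)) := by
  have hsplit : {ω | ε ≤ |X ω|} ⊆ {ω | ε ≤ X ω} ∪ {ω | ε ≤ (-X) ω} := fun ω (hω : ε ≤ |X ω|) =>
    (le_abs.1 hω : ε ≤ X ω ∨ ε ≤ -X ω)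
  calc μ.real {ω | ε ≤ |X ω|} ≤ μ.real {ω | ε ≤ X ω} + μ.real {ω | ε ≤ (-X) ω} :=
        (measureReal_mono hsplit).trans (measureReal_union_le _ _)
    _ ≤ exp (-ε ^ 2 / (2 * c)) + exp (-ε ^ 2 / (2 * c)) :=
        add_le_add (h.measure_ge_le hε) (h.neg.measure_ge_le hε)
    _ = 2 * exp (-ε ^ 2 / (2 * c)) := by ring

end ProbabilityTheory.HasSubgaussianMGF

lemma tendsto_two_pow_mul_exp_neg_mul_rpow {a s : ℝ} (ha : 0 < a) (hs : 1 < s) :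
    Tendsto (fun n : ℕ => 2 ^ n * exp (-(a * (n : ℝ) ^ s))) atTop (𝓝 0) := by
  have hgrowth : Tendsto (fun n : ℕ => a * (n : ℝ) ^ (s - 1)) atTop atTop :=
    ((tendsto_rpow_atTop (by linarith)).comp tendsto_natCast_atTop_atTop).const_mul_atTop ha
  have hexponent : ∀ᶠ n : ℕ in atTop, n * log 2 - a * (n : ℝ) ^ s ≤ -n := by
    filter_upwards [hgrowth.eventually_ge_atTop (log 2 + 1), eventually_ge_atTop 1] with n hn hn1
    have hn0 : (0 : ℝ) < n := by exact_mod_cast hn1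
    rw [show (n : ℝ) ^ s = n * (n : ℝ) ^ (s - 1) by
      rw [rpow_sub hn0, rpow_one, mul_div_cancel₀ _ hn0.ne']]
    nlinarith
  have hbot : Tendsto (fun n : ℕ => n * log 2 - a * (n : ℝ) ^ s) atTop atBot :=
    tendsto_atBot_mono' _ hexponent (tendsto_neg_atTop_atBot.comp tendsto_natCast_atTop_atTop)
  refine (tendsto_exp_atBot.comp hbot).congr fun n => ?_
  simp [exp_sub, exp_nat_mul, exp_log, div_eq_mul_inv, exp_neg]

lemma ofReal_one_sub_lt_measure {Ω : Type*} [MeasurableSpace Ω] {μ : Measure Ω}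
    [IsProbabilityMeasure μ] {s : Set Ω} (hs : MeasurableSet s) {ε : ℝ}
    (h : μ.real sᶜ < min ε 1) : ENNReal.ofReal (1 - ε) < μ s := by
  rw [← ofReal_measureReal, ENNReal.ofReal_lt_ofReal_iff']
  rw [probReal_compl_eq_one_sub hs] at h
  constructor <;> linarith [min_le_left ε 1, min_le_right ε 1]

variable {n : ℕ}

open scoped Classical in
noncomputable def crossingEdges (S : Finset (Fin n)) : Finset (EdgeIdx n) :=
  {e | (∃ u ∈ e.1, u ∈ S) ∧ ∃ v ∈ e.1, v ∉ S}

lemma cut_eq_sum_crossingEdges (S : Finset (Fin n)) (G : EdgeIdx n → Bool) :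
    (cut n S G : ℝ) = ∑ e ∈ crossingEdges S, if G e then 1 else 0 := by
  classical
  rw [cut, crossingEdges, sum_filter, natCast_card_filter]
  refine sum_congr (by congr!) fun e _ => ?_
  by_cases hG : G e <;> simp [hG]

lemma card_crossingEdges (S : Finset (Fin n)) : #(crossingEdges S) = #S * (n - #S) := by
  classical
  rw [show n - #S = #Sᶜ by rw [card_compl, Fintype.card_fin], ← card_product]
  symm
  refine card_bij (fun uv huv => ⟨{uv.1, uv.2}, card_pair ?_⟩) ?_ ?_ ?_
  · simp only [mem_product, mem_compl] at huv
    exact fun h => huv.2 (h ▸ huv.1)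
  · rintro ⟨u, v⟩ huv
    simp only [mem_product, mem_compl] at huv
    simp only [crossingEdges, mem_filter, mem_univ, true_and, mem_insert, mem_singleton]
    exact ⟨⟨u, by simp, huv.1⟩, ⟨v, by simp, huv.2⟩⟩
  · rintro ⟨u, v⟩ huv ⟨u', v'⟩ huv' h
    simp only [mem_product, mem_compl, Subtype.mk.injEq] at huv huv' h
    have hu : u' ∈ ({u, v} : Finset (Fin n)) := h ▸ by simp
    have hv : v' ∈ ({u, v} : Finset (Fin n)) := h ▸ by simp
    simp only [mem_insert, mem_singleton] at hu hv
    grind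
  · rintro ⟨e, he⟩ hS
    simp only [crossingEdges, mem_filter, mem_univ, true_and] at hS
    obtain ⟨⟨u, hue, huS⟩, ⟨v, hve, hvS⟩⟩ := hS
    have huv : u ≠ v := fun h => hvS (h ▸ huS)
    refine ⟨(u, v), by simp [huS, hvS], Subtype.ext ?_⟩
    exact eq_of_subset_of_card_le (insert_subset_iff.2 ⟨hue, singleton_subset_iff.2 hve⟩)
      (by rw [he, card_pair huv])

lemma card_crossingEdges_le (S : Finset (Fin n)) : (#(crossingEdges S) : ℝ) ≤ n ^ 2 / 4 := by
  have hS : #S ≤ n := (card_le_univ S).trans_eq (Fintype.card_fin n)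
  rw [card_crossingEdges, Nat.cast_mul, Nat.cast_sub hS]
  nlinarith [sq_nonneg ((n : ℝ) - 2 * #S)]

lemma card_Lset (φ : Fin n ≃ Fin n) {i : ℕ} (hi : i ≤ n) : #(Lset n φ i) = i := by
  have : Lset n φ i = ({k : Fin n | (k : ℕ) < i} : Finset (Fin n)).map φ.symm.toEmbedding := by
    ext u; simp [Lset]
  rw [this, card_map, Fin.card_filter_val_lt, min_eq_right hi]

section Concentrated

variable {G : EdgeIdx n → Bool} {q t : ℝ}

lemma CW_lt_of_forall_abs_cut_sub_lt (hn : 1 ≤ n) (hq : 0 ≤ q)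
    (hG : ∀ S, |(cut n S G : ℝ) - #(crossingEdges S) * q| < t) (φ : Fin n ≃ Fin n) :
    (CW n G φ : ℝ) < n ^ 2 / 4 * q + t := by
  obtain ⟨i, -, hi⟩ := exists_mem_eq_sup (Icc 1 n) ⟨1, by simp [hn]⟩ (theta n G φ)
  have hdev := (abs_lt.1 (hG (Lset n φ i))).2
  have hcard := mul_le_mul_of_nonneg_right (card_crossingEdges_le (Lset n φ i)) hq
  rw [CW, hi, theta]
  linarith

lemma lt_CW_of_forall_abs_cut_sub_lt (hn : 2 ≤ n) (hq : 0 ≤ q)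
    (hG : ∀ S, |(cut n S G : ℝ) - #(crossingEdges S) * q| < t) (φ : Fin n ≃ Fin n) :
    (n ^ 2 - 1) / 4 * q - t < CW n G φ := by
  set h := n / 2
  have hcard : (#(crossingEdges (Lset n φ h)) : ℝ) = h * (n - h) := by
    rw [card_crossingEdges, card_Lset φ (Nat.div_le_self n 2), Nat.cast_mul,
      Nat.cast_sub (Nat.div_le_self n 2)]
  have hbalanced : ((n : ℝ) ^ 2 - 1) / 4 ≤ h * (n - h) := by
    have h1 : (n : ℝ) ≤ 2 * h + 1 := by exact_mod_cast (by omega : n ≤ 2 * h + 1)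
    have h2 : 2 * (h : ℝ) ≤ n := by exact_mod_cast Nat.mul_div_le n 2
    nlinarith
  have hdev := (abs_lt.1 (hG (Lset n φ h))).1
  have hle : (theta n G φ h : ℝ) ≤ CW n G φ := by
    exact_mod_cast le_sup (f := theta n G φ) (by simp [h]; omega)
  rw [theta] at hle
  rw [hcard] at hdev
  nlinarith [mul_le_mul_of_nonneg_right hbalanced hq]

lemma iSup_CW_lt_mul_iInf_CW (hn : 2 ≤ n) (hq : 0 ≤ q) {η δ : ℝ} (hδ : 0 ≤ δ)
    (hG : ∀ S, |(cut n S G : ℝ) - #(crossingEdges S) * q| < η * n ^ 2 * q)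
    (hgap : (1 / 4 + η) * n ^ 2 ≤ (1 + δ) * ((1 / 4 - η) * n ^ 2 - 1 / 4)) :
    ((⨆ φ : Fin n ≃ Fin n, CW n G φ : ℕ) : ℝ)
      < (1 + δ) * ((⨅ φ : Fin n ≃ Fin n, CW n G φ : ℕ) : ℝ) := by
  obtain ⟨φmax, hmax⟩ := exists_eq_ciSup_of_finite (f := CW n G)
  obtain ⟨φmin, hmin⟩ := exists_eq_ciInf_of_finite (f := CW n G)
  rw [← hmax, ← hmin]
  calc (CW n G φmax : ℝ) < n ^ 2 / 4 * q + η * n ^ 2 * q :=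
        CW_lt_of_forall_abs_cut_sub_lt (by omega) hq hG φmax
    _ = (1 / 4 + η) * n ^ 2 * q := by ring
    _ ≤ (1 + δ) * ((1 / 4 - η) * n ^ 2 - 1 / 4) * q := by gcongr
    _ = (1 + δ) * ((n ^ 2 - 1) / 4 * q - η * n ^ 2 * q) := by ring
    _ < (1 + δ) * CW n G φmin := by
        gcongr
        exact lt_CW_of_forall_abs_cut_sub_lt hn hq hG φmin

end Concentrated

section Random

variable {p : ℝ≥0∞} (hp : p ≤ 1)

instance : IsProbabilityMeasure (erMeasure n p hp) := by
  unfold erMeasure; infer_instance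

noncomputable def edgeIndicator (e : EdgeIdx n) (G : EdgeIdx n → Bool) : ℝ := if G e then 1 else 0

lemma integral_edgeIndicator (e : EdgeIdx n) :
    ∫ G, edgeIndicator e G ∂erMeasure n p hp = p.toReal := by
  unfold erMeasure edgeIndicator
  refine (integral_comp_eval (X := fun _ => Bool) (i := e)
    (f := fun b : Bool => if b then (1 : ℝ) else 0)
    Measurable.of_discrete.aestronglyMeasurable).trans ?_
  simp only [PMF.integral_eq_sum, Fintype.sum_bool]
  erw [PMF.bernoulli_apply]
  simp [ENNReal.coe_toNNReal_eq_toReal]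

lemma iIndepFun_edgeIndicator_sub :
    iIndepFun (fun e G => edgeIndicator e G - p.toReal) (erMeasure n p hp) :=
  iIndepFun_pi (X := fun _ (b : Bool) => (if b then 1 else 0 : ℝ) - p.toReal)
    fun _ => Measurable.of_discrete.aemeasurable

lemma hasSubgaussianMGF_edgeIndicator_sub (e : EdgeIdx n) :
    HasSubgaussianMGF (fun G => edgeIndicator e G - p.toReal) (1 / 4) (erMeasure n p hp) := by
  have h := hasSubgaussianMGF_of_mem_Icc (μ := erMeasure n p hp) (X := edgeIndicator e)
    (a := 0) (b := 1) Measurable.of_discrete.aemeasurable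
    (ae_of_all _ fun G => by unfold edgeIndicator; split <;> simp)
  rw [integral_edgeIndicator] at h
  convert h using 1
  norm_num

lemma measure_abs_cut_sub_ge_le (S : Finset (Fin n)) {t : ℝ} (ht : 0 ≤ t) :
    (erMeasure n p hp).real {G | t ≤ |(cut n S G : ℝ) - #(crossingEdges S) * p.toReal|}
      ≤ 2 * exp (-(8 * t ^ 2 / n ^ 2)) := by
  have hsum := HasSubgaussianMGF.sum_of_iIndepFun (iIndepFun_edgeIndicator_sub hp)
    (s := crossingEdges S) fun e _ => hasSubgaussianMGF_edgeIndicator_sub hp e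
  have hparam : ∑ e ∈ crossingEdges S, (1 / 4 : ℝ≥0) ≤ (n : ℝ≥0) ^ 2 / 16 := by
    rw [sum_const, nsmul_eq_mul, ← NNReal.coe_le_coe]
    push_cast
    linarith [card_crossingEdges_le S]
  convert (hsum.mono hparam).measure_abs_ge_le ht using 3
  · ext G
    simp [cut_eq_sum_crossingEdges, edgeIndicator, sum_sub_distrib]
  · push_cast
    ring

lemma measure_exists_abs_cut_sub_ge_le {t : ℝ} (ht : 0 ≤ t) :
    (erMeasure n p hp).real
        {G | ∃ S : Finset (Fin n), t ≤ |(cut n S G : ℝ) - #(crossingEdges S) * p.toReal|}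
      ≤ 2 ^ n * (2 * exp (-(8 * t ^ 2 / n ^ 2))) := by
  rw [Set.ofPred_exists]
  refine (measureReal_iUnion_fintype_le _).trans ?_
  refine (sum_le_sum fun S _ => measure_abs_cut_sub_ge_le hp S ht).trans_eq ?_
  simp

end Random

lemma sq_mul_rpow_le_sq_mul_sq {x K q c : ℝ} (hx : 0 < x) (hK : 0 ≤ K)
    (h : K * x ^ (-c) ≤ q) : K ^ 2 * x ^ (2 - 2 * c) ≤ x ^ 2 * q ^ 2 := by
  have hrpow : x ^ (2 - 2 * c) = x ^ 2 * (x ^ (-c)) ^ 2 := by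
    rw [← rpow_natCast, ← rpow_natCast, ← rpow_mul hx.le, ← rpow_add hx]
    ring_nf
  rw [hrpow]
  nlinarith [pow_le_pow_left₀ (by positivity) h 2, sq_nonneg x]

-- `δ / (8 * (2 + δ))` makes the coefficients of `n ^ 2` on the two sides differ by `δ / 8`.
lemma eventually_quarter_add_mul_sq_le {δ : ℝ} (hδ : 0 < δ) :
    ∀ᶠ n : ℕ in atTop, (1 / 4 + δ / (8 * (2 + δ))) * (n : ℝ) ^ 2
      ≤ (1 + δ) * ((1 / 4 - δ / (8 * (2 + δ))) * n ^ 2 - 1 / 4) := by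
  filter_upwards [tendsto_natCast_atTop_atTop.eventually_ge_atTop (2 * (1 + δ) / δ),
    eventually_ge_atTop 1] with n hn hn1
  have hdiff : (1 + δ) * ((1 / 4 - δ / (8 * (2 + δ))) * n ^ 2 - 1 / 4)
      - (1 / 4 + δ / (8 * (2 + δ))) * n ^ 2 = δ / 8 * n ^ 2 - (1 + δ) / 4 := by
    field_simp
    ring
  rw [div_le_iff₀ hδ] at hn
  have hnsq : (n : ℝ) ≤ n ^ 2 := by
    have : (1 : ℝ) ≤ n := by exact_mod_cast hn1
    nlinarith
  nlinarith

theorem stmt_11_general (c : ℝ) (hc : c < 1 / 2)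
    (p : ℕ → ℝ≥0∞) (hp1 : ∀ n, p n ≤ 1)
    (hΩ : ∃ K : ℝ, 0 < K ∧ ∀ᶠ n : ℕ in atTop, K * (n : ℝ) ^ (-c) ≤ (p n).toReal) :
    ∀ ε : ℝ, 0 < ε → ∀ δ : ℝ, 0 < δ → ∃ N : ℕ, ∀ n ≥ N,
      ENNReal.ofReal (1 - ε) <
        erMeasure n (p n) (hp1 n)
          {G | ((⨆ φ : Fin n ≃ Fin n, CW n G φ : ℕ) : ℝ)
            < (1 + δ) * ((⨅ φ : Fin n ≃ Fin n, CW n G φ : ℕ) : ℝ)} := by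
  intro ε hε δ hδ
  obtain ⟨K, hK, hpK⟩ := hΩ
  set η := δ / (8 * (2 + δ))
  have hfail := (tendsto_two_pow_mul_exp_neg_mul_rpow (a := 8 * η ^ 2 * K ^ 2)
    (s := 2 - 2 * c) (by positivity) (by linarith)).const_mul 2
  rw [mul_zero] at hfail
  obtain ⟨N, hN⟩ := eventually_atTop.1 <| (hfail.eventually (gt_mem_nhds (lt_min hε one_pos))).and
    ((eventually_quarter_add_mul_sq_le hδ).and (hpK.and (eventually_ge_atTop 2)))
  refine ⟨N, fun n hn => ?_⟩
  obtain ⟨hsmall, hgap, hqK, hn2⟩ := hN n hn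
  set q := (p n).toReal
  have hn0 : (0 : ℝ) < n := by exact_mod_cast (by omega : 0 < n)
  have hq : 0 < q := (by positivity : 0 < K * (n : ℝ) ^ (-c)).trans_le hqK
  apply ofReal_one_sub_lt_measure MeasurableSet.of_discrete
  calc _ ≤ (erMeasure n (p n) (hp1 n)).real
        {G | ∃ S : Finset (Fin n), η * n ^ 2 * q ≤ |(cut n S G : ℝ) - #(crossingEdges S) * q|} :=
        measureReal_mono fun G hG => by
          by_contra hconc
          exact hG (iSup_CW_lt_mul_iInf_CW hn2 hq.le hδ.le (by simpa using hconc) hgap)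
    _ ≤ 2 ^ n * (2 * exp (-(8 * (η * n ^ 2 * q) ^ 2 / n ^ 2))) :=
        measure_exists_abs_cut_sub_ge_le _ (by positivity)
    _ = 2 * (2 ^ n * exp (-(8 * η ^ 2 * (n ^ 2 * q ^ 2)))) := by
        field_simp
    _ ≤ 2 * (2 ^ n * exp (-(8 * η ^ 2 * K ^ 2 * n ^ (2 - 2 * c)))) := by
        rw [mul_assoc (8 * η ^ 2)]
        gcongr 2 * (2 ^ n * exp (-(_ * ?_)))
        exact sq_mul_rpow_le_sq_mul_sq hn0 hK.le hqK
    _ < min ε 1 := hsmall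

/-- Gap theorem for cutwidth: under `G(n, p_n)` with `p_n = Ω(n^{-c})`,
`0 ≤ c < 1/2`, w.h.p. `MAXCW(G_n) < (1 + δ) MINCW(G_n)`. -/
theorem stmt_11 (c : ℝ) (hc0 : 0 ≤ c) (hc : c < 1 / 2)
    (p : ℕ → ℝ≥0∞) (hp1 : ∀ n, p n ≤ 1)
    (hΩ : ∃ K : ℝ, 0 < K ∧ ∀ᶠ n : ℕ in atTop, K * (n : ℝ) ^ (-c) ≤ (p n).toReal) :
    ∀ ε : ℝ, 0 < ε → ∀ δ : ℝ, 0 < δ → ∃ N : ℕ, ∀ n ≥ N,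
      ENNReal.ofReal (1 - ε) <
        erMeasure n (p n) (hp1 n)
          {G | ((⨆ φ : Fin n ≃ Fin n, CW n G φ : ℕ) : ℝ)
            < (1 + δ) * ((⨅ φ : Fin n ≃ Fin n, CW n G φ : ℕ) : ℝ)} :=
  stmt_11_general c hc p hp1 hΩ
end

section
/- Under G(n, p_n) with p_n = Ω(n^{-c}), 0 ≤ c < 1: for all ε, δ > 0 there exists N such that for all n ≥ N, P[MAXVS(G_n) < (1+δ)·MINVS(G_n)] > 1-ε, where VS(G,φ) = max_i δ(i,φ,G) and MAXVS, MINVS are its max and min over layouts φ. -/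
open MeasureTheory ProbabilityTheory Filter
open scoped ENNReal NNReal

/-!
Every layout has `VS ≤ n - 1`. Conversely, suppose every two disjoint `m`-sets of vertices are
joined by an edge. Cutting a layout so that exactly `m` vertices lie to the right, fewer than `m`
of the left vertices can lack a right neighbour, so every layout has `VS ≥ n + 1 - 2m`. With
`m = ⌈η n⌉` and `η = δ / (4 (1 + δ))` this gives the gap for `n > 2`. A union bound over the
`4^n` pairs of sets shows that the property fails with probability at most
`4^n (1 - p)^(m^2) ≤ 4^n exp (-K η^2 n^(2-c))`, which tends to `0` because `c < 1`.
-/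

open Topology

def JoinsDisjointSets (n : ℕ) (G : EdgeIdx n → Bool) (m : ℕ) : Prop :=
  ∀ S T : Finset (Fin n), Disjoint S T → S.card = m → T.card = m →
    ∃ u ∈ S, ∃ v ∈ T, adj n G u v

section Separation

variable {n : ℕ} {G : EdgeIdx n → Bool}

theorem vsep_le_sub_one (φ : Fin n ≃ Fin n) (i : ℕ) : vsep n G φ i ≤ n - 1 := by
  unfold vsep
  by_cases hi : ∃ v, i ≤ (φ v : ℕ)
  · obtain ⟨v, hv⟩ := hi
    calc _ ≤ (Finset.univ.erase v).card := Finset.card_le_card fun w hw => by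
          simp only [Finset.mem_filter, Finset.mem_univ, true_and] at hw
          exact Finset.mem_erase.2 ⟨by rintro rfl; omega, Finset.mem_univ w⟩
      _ = n - 1 := by rw [Finset.card_erase_of_mem (Finset.mem_univ v), Finset.card_fin]
  · calc _ ≤ (∅ : Finset (Fin n)).card := Finset.card_le_card fun w hw => by
          simp only [Finset.mem_filter, Finset.mem_univ, true_and] at hw
          obtain ⟨-, v, hv, -⟩ := hw
          exact absurd ⟨v, hv⟩ hi
      _ ≤ n - 1 := Nat.zero_le _

theorem VS_le_sub_one (φ : Fin n ≃ Fin n) : VS n G φ ≤ n - 1 :=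
  Finset.sup_le fun i _ => vsep_le_sub_one φ i

theorem card_lt_of_joinsDisjointSets {m : ℕ} (hG : JoinsDisjointSets n G m)
    {A T : Finset (Fin n)} (hAT : Disjoint A T) (hT : T.card = m)
    (hA : ∀ u ∈ A, ∀ v ∈ T, ¬ adj n G u v) : A.card < m := by
  by_contra! hmA
  obtain ⟨S, hSA, hS⟩ := Finset.exists_subset_card_eq hmA
  obtain ⟨u, hu, v, hv, huv⟩ := hG S T (hAT.mono_left hSA) hS hT
  exact hA u (hSA hu) v hv huv

theorem card_filter_layout_lt (φ : Fin n ≃ Fin n) {i : ℕ} (hi : i ≤ n) :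
    (Finset.univ.filter fun u : Fin n => (φ u : ℕ) < i).card = i := by
  rw [Finset.card_equiv φ (t := Finset.univ.filter fun v : Fin n => (v : ℕ) < i) (by simp),
    Fin.card_filter_val_lt, min_eq_right hi]

theorem add_one_sub_two_mul_le_VS {m : ℕ} (hm : 0 < m) (hmn : m < n)
    (hG : JoinsDisjointSets n G m) (φ : Fin n ≃ Fin n) : n + 1 - 2 * m ≤ VS n G φ := by
  classical
  set i := n - m
  set L := Finset.univ.filter fun u : Fin n => (φ u : ℕ) < i
  set R := Finset.univ.filter fun v : Fin n => i ≤ (φ v : ℕ)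
  have hL : L.card = n - m := card_filter_layout_lt φ (Nat.sub_le n m)
  have hR : R.card = m := by
    have : R = Lᶜ := by ext; simp [L, R]
    rw [this, Finset.card_compl, hL, Fintype.card_fin]
    omega
  have hsplit := Finset.card_filter_add_card_filter_not
    (s := L) (fun u => ∃ v ∈ R, adj n G u v)
  have hvsep : vsep n G φ i = (L.filter fun u => ∃ v ∈ R, adj n G u v).card := by
    unfold vsep
    congr 1
    ext u
    simp [L, R]
  have hcard := card_lt_of_joinsDisjointSets hG (A := L.filter fun u => ¬ ∃ v ∈ R, adj n G u v)
    (Finset.disjoint_left.2 fun u hu hu' => by simp [L, R] at hu hu'; omega) hR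
    (fun u hu v hv huv => (Finset.mem_filter.1 hu).2 ⟨v, hv, huv⟩)
  have hle : vsep n G φ i ≤ VS n G φ :=
    Finset.le_sup (f := vsep n G φ) (Finset.mem_Icc.2 ⟨by omega, by omega⟩)
  omega

end Separation

theorem iSup_VS_lt_of_joinsDisjointSets {δ : ℝ} (hδ : 0 < δ) {n : ℕ} (hn : 2 < n)
    {G : EdgeIdx n → Bool} (hG : JoinsDisjointSets n G ⌈δ / (4 * (1 + δ)) * n⌉₊) :
    ((⨆ φ : Fin n ≃ Fin n, VS n G φ : ℕ) : ℝ)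
      < (1 + δ) * ((⨅ φ : Fin n ≃ Fin n, VS n G φ : ℕ) : ℝ) := by
  set η := δ / (4 * (1 + δ))
  set m := ⌈η * n⌉₊
  have hη : (1 + δ) * η = δ / 4 := by
    simp only [η]
    field_simp
  have hn' : (2 : ℝ) < n := by exact_mod_cast hn
  have hm_lt : (m : ℝ) < η * n + 1 := Nat.ceil_lt_add_one (by positivity)
  have hm_pos : 0 < m := Nat.ceil_pos.2 (by positivity)
  have hm_n : m < n := by
    have : (m : ℝ) < n := by nlinarith
    exact_mod_cast this
  have hsup : ((⨆ φ : Fin n ≃ Fin n, VS n G φ : ℕ) : ℝ) ≤ n - 1 := by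
    have := ciSup_le fun φ => VS_le_sub_one (G := G) φ
    rw [← Nat.cast_one, ← Nat.cast_sub (by omega)]
    exact_mod_cast this
  have hinf : (n : ℝ) + 1 - 2 * m ≤ ((⨅ φ : Fin n ≃ Fin n, VS n G φ : ℕ) : ℝ) := by
    have := le_ciInf fun φ => add_one_sub_two_mul_le_VS hm_pos hm_n hG φ
    have h2m : 2 * m ≤ n + 1 := by
      have : (2 * m : ℝ) ≤ n + 1 := by nlinarith
      exact_mod_cast this
    calc (n : ℝ) + 1 - 2 * m = ((n + 1 - 2 * m : ℕ) : ℝ) := by push_cast [h2m]; ring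
      _ ≤ _ := by exact_mod_cast this
  calc ((⨆ φ : Fin n ≃ Fin n, VS n G φ : ℕ) : ℝ) ≤ n - 1 := hsup
    -- `(1 + δ) * 2 * m < (1 + δ) * 2 + δ * n / 2` leaves the margin `δ * (n / 2 - 1) > 0`.
    _ < (1 + δ) * (n + 1 - 2 * m) := by nlinarith
    _ ≤ (1 + δ) * ((⨅ φ : Fin n ≃ Fin n, VS n G φ : ℕ) : ℝ) := by gcongr

theorem tendsto_four_pow_mul_exp_neg_rpow {a c : ℝ} (ha : 0 < a) (hc : c < 1) :
    Tendsto (fun n : ℕ => 4 ^ n * Real.exp (-(a * (n : ℝ) ^ (2 - c)))) atTop (𝓝 0) := by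
  have hexp (n : ℕ) : 4 ^ n * Real.exp (-(a * (n : ℝ) ^ (2 - c)))
      = Real.exp (n * (Real.log 4 + -a * (n : ℝ) ^ (1 - c))) := by
    rw [show 2 - c = 1 + (1 - c) by ring, Real.rpow_add' n.cast_nonneg (by linarith),
      Real.rpow_one, mul_add, Real.exp_add, Real.exp_nat_mul, Real.exp_log (by norm_num)]
    ring_nf
  simp_rw [hexp]
  refine Real.tendsto_exp_atBot.comp <| tendsto_natCast_atTop_atTop.atTop_mul_atBot₀ <|
    tendsto_atBot_add_const_left _ _ <| Tendsto.const_mul_atTop_of_neg (by linarith) ?_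
  exact (tendsto_rpow_atTop (by linarith)).comp tendsto_natCast_atTop_atTop

theorem card_edges_between {S T : Finset (Fin n)} (hST : Disjoint S T) :
    (Finset.univ.filter fun e : EdgeIdx n => ∃ u ∈ S, ∃ v ∈ T, e.1 = {u, v}).card
      = S.card * T.card := by
  rw [← Finset.card_product]
  symm
  refine Finset.card_bij (fun uv huv => ⟨{uv.1, uv.2}, Finset.card_pair
      (Finset.disjoint_left.1 hST (Finset.mem_product.1 huv).1 <| · ▸ (Finset.mem_product.1 huv).2)⟩)
    ?_ ?_ ?_
  · intro uv huv
    simp only [Finset.mem_filter, Finset.mem_univ, true_and]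
    exact ⟨uv.1, (Finset.mem_product.1 huv).1, uv.2, (Finset.mem_product.1 huv).2, rfl⟩
  · rintro ⟨u, v⟩ huv ⟨u', v'⟩ huv' h
    simp only [Finset.mem_product] at huv huv'
    have h : ({u, v} : Finset (Fin n)) = {u', v'} := congrArg Subtype.val h
    have hu : u ∈ ({u', v'} : Finset (Fin n)) := h ▸ Finset.mem_insert_self u {v}
    have hv : v ∈ ({u', v'} : Finset (Fin n)) :=
      h ▸ Finset.mem_insert_of_mem (Finset.mem_singleton_self v)
    simp only [Finset.mem_insert, Finset.mem_singleton] at hu hv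
    have := Finset.disjoint_left.1 hST
    rcases hu with rfl | rfl
    · rcases hv with rfl | rfl
      · exact absurd huv.2 (this huv.1)
      · rfl
    · exact absurd huv'.2 (this huv.1)
  · intro e he
    obtain ⟨u, hu, v, hv, huv⟩ := by simpa using he
    exact ⟨(u, v), Finset.mem_product.2 ⟨hu, hv⟩, Subtype.ext huv.symm⟩

section Probability

instance (n : ℕ) (p : ℝ≥0∞) (hp : p ≤ 1) : IsProbabilityMeasure (erMeasure n p hp) := by
  unfold erMeasure
  infer_instance

variable {n : ℕ} {p : ℝ≥0∞} (hp : p ≤ 1)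

theorem erMeasure_forall_eq_false (F : Finset (EdgeIdx n)) :
    erMeasure n p hp {G | ∀ e ∈ F, G e = false} = (1 - p) ^ F.card := by
  classical
  have hbox : {G : EdgeIdx n → Bool | ∀ e ∈ F, G e = false}
      = Set.univ.pi fun e => if e ∈ F then {false} else Set.univ := by
    ext G
    simp only [Set.mem_ofPred_eq, Set.mem_pi, Set.mem_univ, true_implies]
    refine forall_congr' fun e => ?_
    split_ifs with he <;> simp [he]
  rw [hbox, erMeasure, Measure.pi_pi]
  calc _ = ∏ e, if e ∈ F then 1 - p else 1 := Finset.prod_congr rfl fun e _ => by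
        split_ifs
        · rw [PMF.toMeasure_apply_singleton _ _ (measurableSet_singleton _)]
          refine (PMF.bernoulli_apply _ false).trans ?_
          rw [Bool.cond_false, ENNReal.coe_sub, ENNReal.coe_one,
            ENNReal.coe_toNNReal (ne_top_of_le_ne_top ENNReal.one_ne_top hp)]
        · exact measure_univ
    _ = (1 - p) ^ F.card := by rw [Finset.prod_ite_mem, Finset.univ_inter, Finset.prod_const]

theorem erMeasure_no_edge_between {S T : Finset (Fin n)} (hST : Disjoint S T) :
    erMeasure n p hp {G | ∀ u ∈ S, ∀ v ∈ T, ¬ adj n G u v} = (1 - p) ^ (S.card * T.card) := by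
  classical
  rw [← card_edges_between hST, ← erMeasure_forall_eq_false hp]
  congr 1
  ext G
  simp only [Set.mem_ofPred_eq, Finset.mem_filter, Finset.mem_univ, true_and, adj]
  constructor
  · rintro hG e ⟨u, hu, v, hv, he⟩
    by_contra hGe
    exact hG u hu v hv ⟨fun h => Finset.disjoint_left.1 hST hu (h ▸ hv), e,
      Bool.not_eq_false _ ▸ hGe, he⟩
  · rintro hG u hu v hv ⟨-, e, hGe, he⟩
    simp [hG e ⟨u, hu, v, hv, he⟩] at hGe

theorem erMeasure_not_joinsDisjointSets_le (m : ℕ) :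
    erMeasure n p hp {G | ¬ JoinsDisjointSets n G m} ≤ 4 ^ n * (1 - p) ^ (m * m) := by
  classical
  set pairs := Finset.univ.filter fun ST : Finset (Fin n) × Finset (Fin n) =>
    Disjoint ST.1 ST.2 ∧ ST.1.card = m ∧ ST.2.card = m
  have hcover : {G | ¬ JoinsDisjointSets n G m}
      ⊆ ⋃ ST ∈ pairs, {G | ∀ u ∈ ST.1, ∀ v ∈ ST.2, ¬ adj n G u v} := by
    intro G hG
    simp only [JoinsDisjointSets, Set.mem_ofPred_eq] at hG
    push Not at hG
    obtain ⟨S, T, hST, hS, hT, hno⟩ := hG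
    exact Set.mem_biUnion (x := (S, T)) (by simp [pairs, hST, hS, hT]) hno
  have hpairs : (pairs.card : ℝ≥0∞) ≤ 4 ^ n := by
    calc (pairs.card : ℝ≥0∞) ≤ Fintype.card (Finset (Fin n) × Finset (Fin n)) := by
          exact_mod_cast Finset.card_le_univ pairs
      _ = 4 ^ n := by simp [Fintype.card_finset, ← mul_pow]
  calc erMeasure n p hp {G | ¬ JoinsDisjointSets n G m}
      ≤ ∑ ST ∈ pairs, erMeasure n p hp {G | ∀ u ∈ ST.1, ∀ v ∈ ST.2, ¬ adj n G u v} :=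
        (measure_mono hcover).trans (measure_biUnion_finset_le _ _)
    _ = ∑ ST ∈ pairs, (1 - p) ^ (m * m) := Finset.sum_congr rfl fun ST hST => by
        obtain ⟨hd, h1, h2⟩ := (Finset.mem_filter.1 hST).2
        rw [erMeasure_no_edge_between hp hd, h1, h2]
    _ ≤ 4 ^ n * (1 - p) ^ (m * m) := by
        rw [Finset.sum_const, nsmul_eq_mul]
        gcongr

theorem erMeasureReal_not_joinsDisjointSets_le (m : ℕ) :
    (erMeasure n p hp).real {G | ¬ JoinsDisjointSets n G m}
      ≤ 4 ^ n * Real.exp (-(p.toReal * (m * m))) := by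
  calc (erMeasure n p hp).real {G | ¬ JoinsDisjointSets n G m}
      ≤ (4 ^ n * (1 - p) ^ (m * m)).toReal :=
        ENNReal.toReal_mono (by finiteness) (erMeasure_not_joinsDisjointSets_le hp m)
    _ = 4 ^ n * (1 - p.toReal) ^ (m * m) := by
        simp [ENNReal.toReal_sub_of_le hp ENNReal.one_ne_top]
    _ ≤ 4 ^ n * Real.exp (-p.toReal) ^ (m * m) := by
        gcongr
        · linarith [ENNReal.toReal_mono ENNReal.one_ne_top hp, ENNReal.toReal_one]
        · exact Real.one_sub_le_exp_neg _
    _ = 4 ^ n * Real.exp (-(p.toReal * (m * m))) := by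
        rw [← Real.exp_nat_mul]
        push_cast
        ring_nf

end Probability

theorem tendsto_erMeasureReal_not_joinsDisjointSets {c K η : ℝ} (hc : c < 1) (hK : 0 < K)
    (hη : 0 < η) {p : ℕ → ℝ≥0∞} (hp1 : ∀ n, p n ≤ 1)
    (hpK : ∀ᶠ n : ℕ in atTop, K * (n : ℝ) ^ (-c) ≤ (p n).toReal) :
    Tendsto (fun n => (erMeasure n (p n) (hp1 n)).real
      {G | ¬ JoinsDisjointSets n G ⌈η * n⌉₊}) atTop (𝓝 0) := by
  refine squeeze_zero' (Eventually.of_forall fun n => measureReal_nonneg) ?_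
    (tendsto_four_pow_mul_exp_neg_rpow (mul_pos hK (pow_pos hη 2)) hc)
  filter_upwards [hpK] with n hn
  refine (erMeasureReal_not_joinsDisjointSets_le (hp1 n) _).trans ?_
  gcongr 4 ^ n * Real.exp (-?_)
  have hm : η * n ≤ ⌈η * n⌉₊ := Nat.le_ceil _
  calc K * η ^ 2 * (n : ℝ) ^ (2 - c) = K * (n : ℝ) ^ (-c) * (η * n) ^ 2 := by
        rw [sub_eq_neg_add, Real.rpow_add' n.cast_nonneg (by linarith), Real.rpow_two]
        ring
    _ ≤ (p n).toReal * (⌈η * n⌉₊ * ⌈η * n⌉₊) := by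
        rw [sq]
        gcongr

theorem stmt_14_general (c : ℝ) (hc : c < 1)
    (p : ℕ → ℝ≥0∞) (hp1 : ∀ n, p n ≤ 1)
    (hΩ : ∃ K : ℝ, 0 < K ∧ ∀ᶠ n : ℕ in atTop, K * (n : ℝ) ^ (-c) ≤ (p n).toReal) :
    ∀ ε : ℝ, 0 < ε → ∀ δ : ℝ, 0 < δ → ∃ N : ℕ, ∀ n ≥ N,
      ENNReal.ofReal (1 - ε) <
        erMeasure n (p n) (hp1 n)
          {G | ((⨆ φ : Fin n ≃ Fin n, VS n G φ : ℕ) : ℝ)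
            < (1 + δ) * ((⨅ φ : Fin n ≃ Fin n, VS n G φ : ℕ) : ℝ)} := by
  intro ε hε δ hδ
  obtain ⟨K, hK, hpK⟩ := hΩ
  have hbad := tendsto_erMeasureReal_not_joinsDisjointSets hc hK
    (η := δ / (4 * (1 + δ))) (by positivity) hp1 hpK
  obtain ⟨N, hN⟩ := eventually_atTop.1 <|
    (hbad.eventually (gt_mem_nhds (lt_min hε one_pos))).and (eventually_gt_atTop 2)
  refine ⟨N, fun n hn => ?_⟩
  obtain ⟨hsmall, hn2⟩ := hN n hn
  set good := {G | JoinsDisjointSets n G ⌈δ / (4 * (1 + δ)) * n⌉₊}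
  have hgood : 1 - min ε 1 < (erMeasure n (p n) (hp1 n)).real good := by
    rw [← compl_compl good, probReal_compl_eq_one_sub (Set.toFinite _).measurableSet]
    exact sub_lt_sub_left hsmall 1
  calc ENNReal.ofReal (1 - ε) < ENNReal.ofReal ((erMeasure n (p n) (hp1 n)).real good) :=
        ENNReal.ofReal_lt_ofReal_iff'.2
          ⟨by linarith [min_le_left ε 1], by linarith [min_le_right ε 1]⟩
    _ = erMeasure n (p n) (hp1 n) good := ofReal_measureReal
    _ ≤ _ := measure_mono fun G hG => iSup_VS_lt_of_joinsDisjointSets hδ hn2 hG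

/-- Gap theorem for vertex separation: under `G(n, p_n)` with
`p_n = Ω(n^{-c})`, `0 ≤ c < 1`, w.h.p. `MAXVS(G_n) < (1 + δ) MINVS(G_n)`. -/
theorem stmt_14 (c : ℝ) (hc0 : 0 ≤ c) (hc : c < 1)
    (p : ℕ → ℝ≥0∞) (hp1 : ∀ n, p n ≤ 1)
    (hΩ : ∃ K : ℝ, 0 < K ∧ ∀ᶠ n : ℕ in atTop, K * (n : ℝ) ^ (-c) ≤ (p n).toReal) :
    ∀ ε : ℝ, 0 < ε → ∀ δ : ℝ, 0 < δ → ∃ N : ℕ, ∀ n ≥ N,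
      ENNReal.ofReal (1 - ε) <
        erMeasure n (p n) (hp1 n)
          {G | ((⨆ φ : Fin n ≃ Fin n, VS n G φ : ℕ) : ℝ)
            < (1 + δ) * ((⨅ φ : Fin n ≃ Fin n, VS n G φ : ℕ) : ℝ)} :=
  stmt_14_general c hc p hp1 hΩ
end

section
/- Under G(n, p_n) with p_n = Ω(n^{-c}), 0 ≤ c < 1: for all ε, δ > 0 there exists N such that for all n ≥ N, P[MINVB(G_n) ≥ (1-δ)·n/2] > 1-ε, where MINVB(G) is the minimum over layouts φ of the number of vertices u with φ(u) ≤ ⌊n/2⌋ having a neighbor v with φ(v) > ⌊n/2⌋. -/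
open MeasureTheory ProbabilityTheory Filter
open scoped ENNReal NNReal

/-!
A layout splits the vertices into its first `⌊n/2⌋` positions `S` and the rest, and
`δ(⌊n/2⌋, φ, G)` counts the vertices of `S` with a neighbour outside `S`. If it is at most
`⌊n/2⌋ - k`, then some `k` vertices `T ⊆ S` send no edge to the `⌈n/2⌉` vertices outside `S`,
which for fixed `S` and `T` has probability `(1 - p)^(k ⌈n/2⌉)`. A union bound over the at most
`4^n` pairs `(S, T)`, with `k ≈ δn/4`, bounds the failure probability by
`exp (n log 4 - p k ⌈n/2⌉)`, and `p k ⌈n/2⌉ ≥ (Kδ/8) n^(2-c)` outgrows `n log 4` since `c < 1`.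
-/

open Finset Topology

theorem Finset.eq_of_pair_eq_pair {α : Type*} [DecidableEq α] {S : Finset α} {u v u' v' : α}
    (hu : u ∈ S) (hv : v ∉ S) (hv' : v' ∉ S) (h : ({u, v} : Finset α) = {u', v'}) :
    u = u' ∧ v = v' := by
  have hu' : u ∈ ({u', v'} : Finset α) := h ▸ mem_insert_self u {v}
  have hv'' : v ∈ ({u', v'} : Finset α) := h ▸ mem_insert_of_mem (mem_singleton_self v)
  simp only [mem_insert, mem_singleton] at hu' hv''
  obtain rfl : u = u' := hu'.resolve_right fun h => hv' (h ▸ hu)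
  exact ⟨rfl, hv''.resolve_left fun h => hv (h ▸ hu)⟩

theorem ENNReal.one_sub_pow_le_ofReal_exp {p : ℝ≥0∞} (hp : p ≤ 1) (N : ℕ) :
    (1 - p) ^ N ≤ ENNReal.ofReal (Real.exp (-(p.toReal * N))) := by
  have hp1 : p.toReal ≤ 1 := by simpa using ENNReal.toReal_mono ENNReal.one_ne_top hp
  calc (1 - p) ^ N = ENNReal.ofReal ((1 - p.toReal) ^ N) := by
        rw [ENNReal.ofReal_pow (by linarith), ENNReal.ofReal_sub _ ENNReal.toReal_nonneg,
          ENNReal.ofReal_one, ENNReal.ofReal_toReal (ne_top_of_le_ne_top ENNReal.one_ne_top hp)]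
    _ ≤ ENNReal.ofReal (Real.exp (-p.toReal) ^ N) :=
        ENNReal.ofReal_le_ofReal (pow_le_pow_left₀ (by linarith) (Real.one_sub_le_exp_neg _) N)
    _ = _ := by rw [← Real.exp_nat_mul]; ring_nf

theorem tendsto_mul_sub_mul_atBot {c K b : ℝ} (L : ℝ) (hc : c < 1) (hK : 0 < K) (hb : 0 < b)
    {q a : ℕ → ℝ} (hq : ∀ᶠ n : ℕ in atTop, K * (n : ℝ) ^ (-c) ≤ q n)
    (ha : ∀ᶠ n : ℕ in atTop, b * (n : ℝ) ^ 2 ≤ a n) :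
    Tendsto (fun n : ℕ => L * n - q n * a n) atTop atBot := by
  have hgrowth : Tendsto (fun n : ℕ => K * b * (n : ℝ) ^ (1 - c)) atTop atTop :=
    ((tendsto_rpow_atTop (by linarith)).comp tendsto_natCast_atTop_atTop).const_mul_atTop
      (by positivity)
  have hlim : Tendsto (fun n : ℕ => (n : ℝ) * (L - K * b * (n : ℝ) ^ (1 - c))) atTop atBot :=
    tendsto_natCast_atTop_atTop.atTop_mul_atBot₀
      (tendsto_atBot_add_const_left _ L (tendsto_neg_atTop_atBot.comp hgrowth))
  refine tendsto_atBot_mono' _ ?_ hlim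
  filter_upwards [hq, ha, eventually_gt_atTop 0] with n hqn han hn
  have hn : (0 : ℝ) < n := by exact_mod_cast hn
  have hKn : 0 ≤ K * (n : ℝ) ^ (-c) := by positivity
  have hqa : K * (n : ℝ) ^ (-c) * (b * (n : ℝ) ^ 2) ≤ q n * a n :=
    mul_le_mul hqn han (by positivity) (hKn.trans hqn)
  have hpow : (n : ℝ) ^ (1 - c) = n * (n : ℝ) ^ (-c) := by
    rw [sub_eq_add_neg, Real.rpow_add hn, Real.rpow_one]
  rw [hpow]
  nlinarith

theorem MeasureTheory.eventually_ofReal_one_sub_lt_measure_compl {Ω : ℕ → Type*}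
    [∀ n, MeasurableSpace (Ω n)] (μ : ∀ n, Measure (Ω n))
    [∀ n, IsProbabilityMeasure (μ n)] {B : ∀ n, Set (Ω n)}
    (hB : Tendsto (fun n => μ n (B n)) atTop (𝓝 0)) {ε : ℝ} (hε : 0 < ε) :
    ∀ᶠ n in atTop, ENNReal.ofReal (1 - ε) < μ n (B n)ᶜ := by
  have h1 : Tendsto (fun n => 1 - μ n (B n)) atTop (𝓝 1) := by
    simpa using ENNReal.Tendsto.sub tendsto_const_nhds hB (Or.inl ENNReal.one_ne_top)
  filter_upwards [h1.eventually_const_lt (ENNReal.ofReal_lt_one.2 (by linarith : 1 - ε < 1))]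
    with n hn
  refine hn.trans_le (tsub_le_iff_left.2 ?_)
  simpa using measure_univ_le_add_compl (μ := μ n) (B n)

namespace ErdosRenyi

variable {n : ℕ}

instance (p : ℝ≥0∞) (hp : p ≤ 1) : IsProbabilityMeasure (erMeasure n p hp) := by
  unfold erMeasure; infer_instance

def edgesAbsent (A : Finset (EdgeIdx n)) : Set (EdgeIdx n → Bool) :=
  {G | ∀ e ∈ A, G e = false}

theorem erMeasure_edgesAbsent (p : ℝ≥0∞) (hp : p ≤ 1) (A : Finset (EdgeIdx n)) :
    erMeasure n p hp (edgesAbsent A) = (1 - p) ^ #A := by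
  classical
  have hset : edgesAbsent A = Set.univ.pi fun e => if e ∈ A then {false} else Set.univ := by
    ext G; simp only [edgesAbsent, Set.mem_ofPred_eq, Set.mem_pi, Set.mem_univ, true_implies]
    refine forall_congr' fun e => ?_
    split_ifs with he <;> simp [he]
  rw [hset, erMeasure, Measure.pi_pi]
  calc _ = ∏ e, if e ∈ A then 1 - p else 1 := prod_congr rfl fun e _ => ?_
    _ = _ := by rw [prod_ite_mem, univ_inter, prod_const]
  split_ifs
  · rw [PMF.toMeasure_apply_singleton _ _ (measurableSet_singleton _)]
    change ((1 - p.toNNReal : ℝ≥0) : ℝ≥0∞) = 1 - p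
    rw [ENNReal.coe_sub, ENNReal.coe_one,
      ENNReal.coe_toNNReal (ne_top_of_le_ne_top ENNReal.one_ne_top hp)]
  · exact measure_univ

open Classical in
noncomputable def crossEdges (T S : Finset (Fin n)) : Finset (EdgeIdx n) :=
  {e | ∃ u ∈ T, ∃ v ∉ S, e.1 = {u, v}}

theorem card_crossEdges {T S : Finset (Fin n)} (hTS : T ⊆ S) :
    #(crossEdges T S) = #T * #Sᶜ := by
  classical
  have hne : ∀ x ∈ T ×ˢ Sᶜ, x.1 ≠ x.2 := fun x hx h =>
    (mem_compl.1 (mem_product.1 hx).2) (h ▸ hTS (mem_product.1 hx).1)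
  rw [← card_product]
  refine (card_bij (fun x hx => (⟨{x.1, x.2}, card_pair (hne x hx)⟩ : EdgeIdx n)) ?_ ?_ ?_).symm
  · intro x hx
    rw [mem_product, mem_compl] at hx
    simp only [crossEdges, mem_filter, mem_univ, true_and]
    exact ⟨x.1, hx.1, x.2, hx.2, rfl⟩
  · intro x hx y hy hxy
    rw [mem_product, mem_compl] at hx hy
    obtain ⟨h1, h2⟩ := eq_of_pair_eq_pair (hTS hx.1) hx.2 hy.2 (congrArg Subtype.val hxy)
    exact Prod.ext h1 h2
  · intro e he
    simp only [crossEdges, mem_filter, mem_univ, true_and] at he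
    obtain ⟨u, hu, v, hv, he⟩ := he
    exact ⟨(u, v), mem_product.2 ⟨hu, mem_compl.2 hv⟩, Subtype.ext he.symm⟩

/-- Some `m`-set `S` contains `k` vertices with no neighbour outside `S`. -/
noncomputable def interiorEvent (n m k : ℕ) : Set (EdgeIdx n → Bool) :=
  ⋃ S ∈ powersetCard m (univ : Finset (Fin n)), ⋃ T ∈ powersetCard k S,
    edgesAbsent (crossEdges T S)

theorem erMeasure_interiorEvent_le (p : ℝ≥0∞) (hp : p ≤ 1) (m k : ℕ) :
    erMeasure n p hp (interiorEvent n m k)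
      ≤ (n.choose m * m.choose k : ℕ) * (1 - p) ^ (k * (n - m)) := by
  have hterm : ∀ S ∈ powersetCard m (univ : Finset (Fin n)), ∀ T ∈ powersetCard k S,
      erMeasure n p hp (edgesAbsent (crossEdges T S)) = (1 - p) ^ (k * (n - m)) := by
    intro S hS T hT
    rw [mem_powersetCard] at hS hT
    rw [erMeasure_edgesAbsent, card_crossEdges hT.1, card_compl, Fintype.card_fin, hS.2, hT.2]
  have hinner : ∀ S ∈ powersetCard m (univ : Finset (Fin n)),
      ∑ T ∈ powersetCard k S, erMeasure n p hp (edgesAbsent (crossEdges T S))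
        = m.choose k * (1 - p) ^ (k * (n - m)) := by
    intro S hS
    rw [sum_congr rfl (hterm S hS), sum_const, card_powersetCard, (mem_powersetCard.1 hS).2,
      nsmul_eq_mul]
  calc erMeasure n p hp (interiorEvent n m k)
      ≤ ∑ S ∈ powersetCard m univ,
          erMeasure n p hp (⋃ T ∈ powersetCard k S, edgesAbsent (crossEdges T S)) :=
        measure_biUnion_finset_le _ _
    _ ≤ ∑ S ∈ powersetCard m univ,
          ∑ T ∈ powersetCard k S, erMeasure n p hp (edgesAbsent (crossEdges T S)) :=
        sum_le_sum fun S _ => measure_biUnion_finset_le _ _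
    _ = _ := by
      rw [sum_congr rfl hinner, sum_const, card_powersetCard, card_univ, Fintype.card_fin,
        nsmul_eq_mul]
      push_cast
      ring

theorem card_Lset (φ : Fin n ≃ Fin n) (m : ℕ) : #(Lset n φ m) = min n m := by
  rw [← Fin.card_filter_val_lt]
  exact card_equiv φ fun u => by simp [Lset]

theorem mem_edgesAbsent_crossEdges {G : EdgeIdx n → Bool} {T S : Finset (Fin n)}
    (h : ∀ u ∈ T, ∀ v ∉ S, ¬ adj n G u v) : G ∈ edgesAbsent (crossEdges T S) := by
  intro e he
  simp only [crossEdges, mem_filter, mem_univ, true_and] at he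
  obtain ⟨u, hu, v, hv, huv⟩ := he
  refine Bool.not_eq_true _ |>.mp fun hGe => h u hu v hv ⟨fun h => ?_, e, hGe, huv⟩
  have := e.2
  simp [huv, h] at this

theorem lt_vsep_add_of_notMem_interiorEvent {m k : ℕ} (hm : m ≤ n) {G : EdgeIdx n → Bool}
    (hG : G ∉ interiorEvent n m k) (φ : Fin n ≃ Fin n) : m < vsep n G φ m + k := by
  classical
  set S := Lset n φ m
  set P : Fin n → Prop := fun u => ∃ v, m ≤ (φ v : ℕ) ∧ adj n G u v
  have hvsep : vsep n G φ m = #(S.filter P) := by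
    simp only [vsep, S, Lset, filter_filter]
    congr
  have hsplit : #(S.filter P) + #(S.filter fun u => ¬ P u) = m := by
    rw [card_filter_add_card_filter_not, card_Lset, min_eq_right hm]
  by_contra! hle
  obtain ⟨T, hTW, hT⟩ :=
    exists_subset_card_eq (s := S.filter fun u => ¬ P u) (n := k) (by omega)
  have hTS : T ⊆ S := hTW.trans (filter_subset _ _)
  refine hG (Set.mem_biUnion (mem_powersetCard.2 ⟨subset_univ S, ?_⟩)
    (Set.mem_biUnion (mem_powersetCard.2 ⟨hTS, hT⟩) (mem_edgesAbsent_crossEdges ?_)))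
  · rw [card_Lset, min_eq_right hm]
  · intro u hu v hv huv
    refine (mem_filter.1 (hTW hu)).2 ⟨v, ?_, huv⟩
    simpa [S, Lset] using hv

theorem erMeasure_interiorEvent_le_ofReal_exp (p : ℝ≥0∞) (hp : p ≤ 1) (k : ℕ) :
    erMeasure n p hp (interiorEvent n (n / 2) k)
      ≤ ENNReal.ofReal (Real.exp (Real.log 4 * n - p.toReal * (k * (n - n / 2) : ℕ))) := by
  have hchoose : n.choose (n / 2) * (n / 2).choose k ≤ 4 ^ n := by
    calc n.choose (n / 2) * (n / 2).choose k ≤ 2 ^ n * 2 ^ n :=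
          Nat.mul_le_mul (Nat.choose_le_two_pow _ _) ((Nat.choose_le_two_pow _ _).trans
            (Nat.pow_le_pow_right two_pos (Nat.div_le_self n 2)))
      _ = 4 ^ n := by rw [← mul_pow]; norm_num
  have h4 : Real.exp (Real.log 4 * n) = 4 ^ n := by
    rw [← Real.rpow_def_of_pos (by norm_num), Real.rpow_natCast]
  calc erMeasure n p hp (interiorEvent n (n / 2) k)
      ≤ (4 ^ n : ℕ) * (1 - p) ^ (k * (n - n / 2)) :=
        (erMeasure_interiorEvent_le p hp _ k).trans (by gcongr)
    _ ≤ ENNReal.ofReal (4 ^ n) *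
          ENNReal.ofReal (Real.exp (-(p.toReal * (k * (n - n / 2) : ℕ)))) := by
        gcongr
        · simp
        · exact ENNReal.one_sub_pow_le_ofReal_exp hp _
    _ = _ := by
        rw [← ENNReal.ofReal_mul (by positivity), sub_eq_add_neg, Real.exp_add, h4]

theorem tendsto_erMeasure_interiorEvent {c : ℝ} (hc : c < 1) {p : ℕ → ℝ≥0∞}
    (hp1 : ∀ n, p n ≤ 1) {K : ℝ} (hK : 0 < K)
    (hpK : ∀ᶠ n : ℕ in atTop, K * (n : ℝ) ^ (-c) ≤ (p n).toReal)
    {b : ℝ} (hb : 0 < b) {k : ℕ → ℕ} (hk : ∀ n, b * n ≤ k n) :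
    Tendsto (fun n => erMeasure n (p n) (hp1 n) (interiorEvent n (n / 2) (k n)))
      atTop (𝓝 0) := by
  have hsize : ∀ n : ℕ, b / 2 * (n : ℝ) ^ 2 ≤ ((k n * (n - n / 2) : ℕ) : ℝ) := by
    intro n
    have hhalf : (n : ℝ) / 2 ≤ ((n - n / 2 : ℕ) : ℝ) := by
      rw [div_le_iff₀ two_pos]; exact_mod_cast (by omega : n ≤ (n - n / 2) * 2)
    push_cast [Nat.cast_mul]
    calc b / 2 * (n : ℝ) ^ 2 = (b * n) * (n / 2) := by ring
      _ ≤ _ := mul_le_mul (hk n) hhalf (by positivity) (by positivity)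
  have hexp := tendsto_mul_sub_mul_atBot (Real.log 4) hc hK (half_pos hb) hpK
    (Eventually.of_forall hsize)
  have hbound := ENNReal.tendsto_ofReal (Real.tendsto_exp_atBot.comp hexp)
  rw [ENNReal.ofReal_zero] at hbound
  exact tendsto_of_tendsto_of_tendsto_of_le_of_le tendsto_const_nhds hbound (fun _ => zero_le)
    fun n => erMeasure_interiorEvent_le_ofReal_exp (p n) (hp1 n) (k n)

end ErdosRenyi

open ErdosRenyi in
theorem stmt_15_general (c : ℝ) (hc : c < 1)
    (p : ℕ → ℝ≥0∞) (hp1 : ∀ n, p n ≤ 1)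
    (hΩ : ∃ K : ℝ, 0 < K ∧ ∀ᶠ n : ℕ in atTop, K * (n : ℝ) ^ (-c) ≤ (p n).toReal) :
    ∀ ε : ℝ, 0 < ε → ∀ δ : ℝ, 0 < δ → ∃ N : ℕ, ∀ n ≥ N,
      ENNReal.ofReal (1 - ε) <
        erMeasure n (p n) (hp1 n)
          {G | (1 - δ) * (n : ℝ) / 2
            ≤ ((⨅ φ : Fin n ≃ Fin n, vsep n G φ (n / 2) : ℕ) : ℝ)} := by
  intro ε hε δ hδ
  obtain ⟨K, hK, hpK⟩ := hΩ
  -- once `δn ≥ 2`, `k n ≤ δn/4 + 1 ≤ δn/2`: the slack turning `⌊n/2⌋ + 1 - k` into `(1 - δ) n/2`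
  set k : ℕ → ℕ := fun n => ⌈δ * n / 4⌉₊
  have hbad := tendsto_erMeasure_interiorEvent hc hp1 hK hpK (b := δ / 4) (by positivity)
    (k := k) fun n => by simpa [div_mul_eq_mul_div] using Nat.le_ceil (δ * n / 4)
  have hgood : ∀ᶠ n : ℕ in atTop, (interiorEvent n (n / 2) (k n))ᶜ ⊆
      {G | (1 - δ) * (n : ℝ) / 2
        ≤ ((⨅ φ : Fin n ≃ Fin n, vsep n G φ (n / 2) : ℕ) : ℝ)} := by
    filter_upwards [(tendsto_natCast_atTop_atTop.const_mul_atTop hδ).eventually_ge_atTop 2]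
      with n hn G hG
    obtain ⟨φ, hφ⟩ := ciInf_mem fun φ : Fin n ≃ Fin n => vsep n G φ (n / 2)
    have hsep : n / 2 < vsep n G φ (n / 2) + k n :=
      lt_vsep_add_of_notMem_interiorEvent (Nat.div_le_self n 2) hG φ
    have hhalf : (n : ℝ) ≤ 2 * (n / 2 : ℕ) + 1 := by
      exact_mod_cast (by omega : n ≤ 2 * (n / 2) + 1)
    have hk : (k n : ℝ) < δ * n / 4 + 1 := Nat.ceil_lt_add_one (by positivity)
    have hsep' : ((n / 2 : ℕ) : ℝ) + 1 ≤ vsep n G φ (n / 2) + k n := by exact_mod_cast hsep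
    simp only [Set.mem_ofPred_eq, ← hφ]
    linarith
  obtain ⟨N, hN⟩ := eventually_atTop.1
    ((eventually_ofReal_one_sub_lt_measure_compl _ hbad hε).and hgood)
  exact ⟨N, fun n hn => (hN n hn).1.trans_le (measure_mono (hN n hn).2)⟩

/-- High-probability lower bound for minimum vertex bisection: under
`G(n, p_n)` with `p_n = Ω(n^{-c})`, `0 ≤ c < 1`, w.h.p.
`MINVB(G_n) ≥ (1 - δ) n / 2`. -/
theorem stmt_15 (c : ℝ) (hc0 : 0 ≤ c) (hc : c < 1)
    (p : ℕ → ℝ≥0∞) (hp1 : ∀ n, p n ≤ 1)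
    (hΩ : ∃ K : ℝ, 0 < K ∧ ∀ᶠ n : ℕ in atTop, K * (n : ℝ) ^ (-c) ≤ (p n).toReal) :
    ∀ ε : ℝ, 0 < ε → ∀ δ : ℝ, 0 < δ → ∃ N : ℕ, ∀ n ≥ N,
      ENNReal.ofReal (1 - ε) <
        erMeasure n (p n) (hp1 n)
          {G | (1 - δ) * (n : ℝ) / 2
            ≤ ((⨅ φ : Fin n ≃ Fin n, vsep n G φ (n / 2) : ℕ) : ℝ)} :=
  stmt_15_general c hc p hp1 hΩ
end
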